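/- arXiv:2202.06394 — 2 statements merged into one kernel-verified Lean document; each statement's English description precedes it below -/
import Mathlib

section
/- For the reflection I : Cat → Preord, a functor f : A → B is stably vertical (every pullback of f along any functor in Cat is vertical, i.e., sent to an isomorphism by I) if and only if f is bijective on objects and full (for every pair of objects a, a' of A, the map Hom_A(a,a') → Hom_B(f a, f a') is surjective). -/
open CategoryTheory
universe u

/-- The objects of a small category, regarded as carrying the reflected preorder. -/
def PreOb (A : Cat.{u, u}) : Type u := A

instance instPreObPreorder (A : Cat.{u, u}) : Preorder (PreOb A) where
  le x y := Nonempty ((show ↑A from x) ⟶ (show ↑A from y))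
  le_refl x := ⟨𝟙 _⟩
  le_trans _ _ _ h h' := ⟨h.some ≫ h'.some⟩

/-- The reflection `I : Cat → Preord` on objects (regarded as landing in `Cat`). -/
def ICat (A : Cat.{u, u}) : Cat.{u, u} := Cat.of (PreOb A)

instance (A : Cat.{u, u}) : Preorder ↑(ICat A) := instPreObPreorder A

/-- In the reflected preorder, a morphism of `A` witnesses an inequality. -/
def toLe {A : Cat.{u, u}} {x y : ↑A} (g : x ⟶ y) :
    (show PreOb A from x) ≤ (show PreOb A from y) := ⟨g⟩

/-- The unit of the reflection `Cat → Preord`. -/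
def etaF (A : Cat.{u, u}) : A ⟶ ICat A where
  toFunctor := {
    obj x := (show PreOb A from x)
    map {_x _y} g := homOfLE (toLe g)
    map_id _ := rfl
    map_comp _ _ := rfl }

/-- The reflection `I : Cat → Preord` on morphisms. -/
def IFun {A B : Cat.{u, u}} (f : A ⟶ B) : ICat A ⟶ ICat B where
  toFunctor := {
    obj x := (show PreOb B from f.toFunctor.obj (show ↑A from x))
    map {_x _y} g := homOfLE (Nonempty.map (fun h => f.toFunctor.map h) (leOfHom g))
    map_id _ := rfl
    map_comp _ _ := rfl }

/-- `f` is stably vertical: every pullback of `f` is inverted by the reflection `I`. -/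
def StablyVertical {A B : Cat.{u, u}} (f : A ⟶ B) : Prop :=
  ∀ (C P : Cat.{u, u}) (g : C ⟶ B) (π₁ : P ⟶ C) (π₂ : P ⟶ A),
    IsPullback π₁ π₂ g f → IsIso (IFun π₁)

/-!
Objects of a pullback in `Cat` are computed as in `Type`, because `Cat.objects` preserves limits,
and morphisms are detected by functors out of the interval `0 ⟶ 1`. Pulling `f` back along `𝟙 B`
shows that `f` is bijective on objects; pulling it back along `β : f a ⟶ f a'`, the arrow `0 ⟶ 1`
must be reflected to a morphism of the pullback, whose second component is a preimage of `β`.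
Conversely, if `f` is bijective on objects and full, every projection `π₁` is bijective on objects,
and any `k : π₁ x ⟶ π₁ y` together with a preimage under `f` of `g k` is a compatible pair of
intervals, which lifts to an interval in the pullback from `x` to `y`.
-/

lemma isIso_IFun_iff {X Y : Cat.{u, u}} (F : X ⟶ Y) :
    IsIso (IFun F) ↔ Function.Bijective F.toFunctor.obj ∧
      ∀ x y : ↑X, Nonempty (F.toFunctor.obj x ⟶ F.toFunctor.obj y) → Nonempty (x ⟶ y) := by
  constructor
  · intro hF
    refine ⟨(isIso_iff_bijective (Cat.objects.map (IFun F))).1 inferInstance, fun x y n => ?_⟩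
    have h := Functor.congr_obj (congrArg Cat.Hom.toFunctor (IsIso.hom_inv_id (IFun F)))
    exact leOfHom (eqToHom (h x).symm ≫ (inv (IFun F)).toFunctor.map (homOfLE n) ≫ eqToHom (h y))
  · rintro ⟨hbij, hreflect⟩
    let e := Equiv.ofBijective _ hbij
    let G : ICat Y ⟶ ICat X := { toFunctor :=
      { obj y := e.symm y
        map {y y'} h := homOfLE (hreflect _ _ (by
          have := leOfHom h
          rwa [← e.apply_symm_apply y, ← e.apply_symm_apply y'] at this)) } }
    refine ⟨G, ?_, ?_⟩ <;>
      refine Cat.Hom.ext (CategoryTheory.Functor.ext (fun x => ?_) (fun _ _ _ => rfl))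
    exacts [e.symm_apply_apply x, e.apply_symm_apply x]

abbrev intervalCat : Cat.{u, u} := Cat.of (AsSmall.{u} (Fin 2))

def intervalCat.arrow : @Quiver.Hom intervalCat.{u} _ ⟨0⟩ ⟨1⟩ :=
  AsSmall.up.map (homOfLE (by decide : (0 : Fin 2) ≤ 1))

def arrowCat {C : Cat.{u, u}} {X Y : ↑C} (k : X ⟶ Y) : intervalCat.{u} ⟶ C :=
  (AsSmall.down ⋙ ComposableArrows.mk₁ k).toCatHom

lemma arrowCat_congr {C : Cat.{u, u}} {X Y X' Y' : ↑C} {k : X ⟶ Y} {k' : X' ⟶ Y'}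
    (hX : X = X') (hY : Y = Y') (w : k = eqToHom hX ≫ k' ≫ eqToHom hY.symm) :
    arrowCat k = arrowCat k' :=
  congrArg (fun G : ComposableArrows C 1 => ((AsSmall.down ⋙ G).toCatHom : intervalCat ⟶ C))
    (ComposableArrows.ext₁ hX hY w)

lemma arrowCat_comp {C D : Cat.{u, u}} {X Y : ↑C} (k : X ⟶ Y) (F : C ⟶ D) :
    arrowCat k ≫ F = arrowCat (F.toFunctor.map k) := by
  have : ComposableArrows.mk₁ k ⋙ F.toFunctor = ComposableArrows.mk₁ (F.toFunctor.map k) :=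
    ComposableArrows.ext₁ rfl rfl (by
      erw [eqToHom_refl, eqToHom_refl]
      exact ((Category.id_comp _).trans (Category.comp_id _)).symm)
  exact Cat.Hom.ext (congrArg (AsSmall.down ⋙ ·) this)

lemma arrowCat_map_of_eq {C : Cat.{u, u}} {X Y : ↑C} (k : X ⟶ Y) {i j : intervalCat.{u}}
    (m : i ⟶ j) (hi : i = ⟨0⟩) (hj : j = ⟨1⟩) :
    (arrowCat k).toFunctor.map m = eqToHom (by subst hi; rfl) ≫ k ≫ eqToHom (by subst hj; rfl) := by
  subst hi hj
  erw [eqToHom_refl, eqToHom_refl]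
  exact ((Category.id_comp _).trans (Category.comp_id _)).symm

section Pullback

variable {A B C P : Cat.{u, u}} {f : A ⟶ B} {g : C ⟶ B} {π₁ : P ⟶ C} {π₂ : P ⟶ A}

lemma Cat.exists_of_isPullback (hpb : IsPullback π₁ π₂ g f) (c : ↑C) (a : ↑A)
    (h : g.toFunctor.obj c = f.toFunctor.obj a) :
    ∃ x : ↑P, π₁.toFunctor.obj x = c ∧ π₂.toFunctor.obj x = a :=
  Limits.Types.exists_of_isPullback (hpb.map Cat.objects) c a h

lemma bijective_obj_fst_of_isPullback (hpb : IsPullback π₁ π₂ g f)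
    (hf : Function.Bijective f.toFunctor.obj) : Function.Bijective π₁.toFunctor.obj := by
  have : IsIso (Cat.objects.map f) := (isIso_iff_bijective _).2 hf
  exact (isIso_iff_bijective _).1 (hpb.map Cat.objects).isIso_fst_of_isIso

lemma isIso_IFun_fst_of_isPullback (hpb : IsPullback π₁ π₂ g f)
    (hbij : Function.Bijective f.toFunctor.obj)
    (hfull : ∀ a a' : ↑A, Function.Surjective (fun h : a ⟶ a' => f.toFunctor.map h)) :
    IsIso (IFun π₁) := by
  have hπ₁ := bijective_obj_fst_of_isPullback hpb hbij
  refine (isIso_IFun_iff π₁).2 ⟨hπ₁, fun x y ⟨k⟩ => ?_⟩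
  have hw := Functor.congr_obj (congrArg Cat.Hom.toFunctor hpb.w)
  obtain ⟨h, hh⟩ := hfull (π₂.toFunctor.obj x) (π₂.toFunctor.obj y)
    (eqToHom (hw x).symm ≫ g.toFunctor.map k ≫ eqToHom (hw y))
  have hcomm : arrowCat k ≫ g = arrowCat h ≫ f := by
    rw [arrowCat_comp, arrowCat_comp]
    exact arrowCat_congr (hw x) (hw y) (by simp [hh])
  set L := hpb.lift _ _ hcomm
  have hL := Functor.congr_obj (congrArg Cat.Hom.toFunctor (hpb.lift_fst _ _ hcomm))
  have h₀ : L.toFunctor.obj ⟨0⟩ = x := hπ₁.1 (hL _)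
  have h₁ : L.toFunctor.obj ⟨1⟩ = y := hπ₁.1 (hL _)
  exact ⟨eqToHom h₀.symm ≫ L.toFunctor.map intervalCat.arrow ≫ eqToHom h₁⟩

end Pullback

section StablyVertical

variable {A B : Cat.{u, u}} {f : A ⟶ B}

lemma bijective_obj_of_stablyVertical (hf : StablyVertical f) :
    Function.Bijective f.toFunctor.obj :=
  ((isIso_IFun_iff f).1 (hf B A (𝟙 B) f (𝟙 A) (IsPullback.id_vert f))).1

lemma full_of_stablyVertical (hf : StablyVertical f) (a a' : ↑A) :
    Function.Surjective (fun h : a ⟶ a' => f.toFunctor.map h) := by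
  intro β
  have hpb := IsPullback.of_hasPullback (arrowCat β) f
  obtain ⟨-, hreflect⟩ := (isIso_IFun_iff _).1 (hf _ _ _ _ _ hpb)
  obtain ⟨x, hx, hxa⟩ := Cat.exists_of_isPullback hpb ⟨0⟩ a rfl
  obtain ⟨y, hy, hya⟩ := Cat.exists_of_isPullback hpb ⟨1⟩ a' rfl
  obtain ⟨p⟩ := hreflect x y ⟨eqToHom hx ≫ intervalCat.arrow ≫ eqToHom hy.symm⟩
  refine ⟨eqToHom hxa.symm ≫ (Limits.pullback.snd _ f).toFunctor.map p ≫ eqToHom hya, ?_⟩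
  have hsq := Functor.congr_hom (congrArg Cat.Hom.toFunctor hpb.w) p
  simp only [Cat.Hom.comp_toFunctor, Functor.comp_map] at hsq
  rw [arrowCat_map_of_eq β _ hx hy, eqToHom_comp_iff, comp_eqToHom_iff] at hsq
  simp [hsq, eqToHom_map]

end StablyVertical

/-- A functor `f : A ⟶ B` is stably vertical for the reflection `Cat → Preord` iff it is
bijective on objects and full. -/
theorem stablyVertical_iff {A B : Cat.{u, u}} (f : A ⟶ B) :
    StablyVertical f ↔
      (Function.Bijective f.toFunctor.obj ∧
        ∀ a a' : ↑A, Function.Surjective (fun g : a ⟶ a' => f.toFunctor.map g)) :=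
  ⟨fun hf => ⟨bijective_obj_of_stablyVertical hf, full_of_stablyVertical hf⟩,
    fun ⟨hbij, hfull⟩ _ _ _ _ _ hpb => isIso_IFun_fst_of_isPullback hpb hbij hfull⟩
end

section
/- If f : A → B is a functor between small categories that is not faithful, then there exist a preorder X and a functor φ : X → B such that the pullback X ×_B A in Cat is not a preorder. Consequently f is not a covering for the reflection Cat → Preord. -/
open CategoryTheory
universe u

/-- `f` is a trivial covering when its naturality square for the unit is a pullback in `Cat`. -/
def TrivialCov {A B : Cat.{u, u}} (f : A ⟶ B) : Prop :=
  IsPullback (etaF A) f (IFun f) (etaF B)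

/-- `p` is an effective descent morphism in `Cat`:
the pullback functor `p* : Cat/B → Cat/E` is monadic. -/
def EffDesc {E B : Cat.{u, u}} (p : E ⟶ B) : Prop :=
  Nonempty (MonadicRightAdjoint (Over.pullback p))

/-- `f` is a covering: some effective descent morphism pulls it back to a trivial covering. -/
def Covering {A B : Cat.{u, u}} (f : A ⟶ B) : Prop :=
  ∃ (C P : Cat.{u, u}) (p : C ⟶ B) (π₁ : P ⟶ C) (π₂ : P ⟶ A),
    EffDesc p ∧ IsPullback π₁ π₂ p f ∧ TrivialCov π₁

/-- A category is thin (a preorder) when there is at most one morphism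
between any two objects. -/
def Thin (X : Cat.{u, u}) : Prop := ∀ x y : ↑X, Subsingleton (x ⟶ y)

/-!
Choose `g ≠ g'` with `f g = f g'` and let `s, s'` be the functors from the walking arrow selecting
them. Over `φ = s ≫ f`, the sections `(𝟙, s)` and `(𝟙, s')` of the pullback agree on objects
but not on the arrow, so the pullback is not thin. For a covering, pulling the two maps
`s, s' : φ ⟶ f` of `Cat/B` back along the effective descent morphism `p` lands over the trivial
covering `π₁`, which cannot separate functors that agree on objects and over `C`; since `p*`
is faithful, `s = s'`.
-/

open Limits

lemma CategoryTheory.Cat.Hom.ext_of_thin {X Y : Cat.{u, u}} (hY : Thin Y) {F G : X ⟶ Y}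
    (h : ∀ x, F.toFunctor.obj x = G.toFunctor.obj x) : F = G :=
  Cat.Hom.ext (Functor.ext h fun _ _ _ => (hY _ _).elim _ _)

lemma thin_ICat (A : Cat.{u, u}) : Thin (ICat A) := fun _ _ => ⟨fun ⟨⟨_⟩⟩ ⟨⟨_⟩⟩ => rfl⟩

lemma CategoryTheory.IsPullback.cat_obj_ext {P X Y Z : Cat.{u, u}} {fst : P ⟶ X}
    {snd : P ⟶ Y} {f : X ⟶ Z} {g : Y ⟶ Z} (hp : IsPullback fst snd f g) {z z' : P}
    (h₁ : fst.toFunctor.obj z = fst.toFunctor.obj z')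
    (h₂ : snd.toFunctor.obj z = snd.toFunctor.obj z') : z = z' := by
  let point (z : P) : Cat.of (Discrete PUnit.{u + 1}) ⟶ P := (Functor.fromPUnit z).toCatHom
  have point_comp_ext {W : Cat.{u, u}} (F : P ⟶ W)
      (h : F.toFunctor.obj z = F.toFunctor.obj z') : point z ≫ F = point z' ≫ F := by
    refine Cat.Hom.ext
      (?_ : Functor.fromPUnit z ⋙ F.toFunctor = Functor.fromPUnit z' ⋙ F.toFunctor)
    refine Functor.ext (fun _ => h) ?_
    rintro ⟨⟨⟩⟩ ⟨⟨⟩⟩ m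
    obtain rfl : m = 𝟙 _ := Subsingleton.elim _ _
    simp
  have : point z = point z' := hp.hom_ext (point_comp_ext fst h₁) (point_comp_ext snd h₂)
  exact congrArg (fun F => F.toFunctor.obj ⟨⟨⟩⟩) this

lemma CategoryTheory.ComposableArrows.mk₁_comp_eq {C D : Type*} [Category C] [Category D]
    (F : C ⥤ D) {X₀ X₁ : C} (g : X₀ ⟶ X₁) : mk₁ g ⋙ F = mk₁ (F.map g) :=
  ext₁ rfl rfl (by erw [eqToHom_refl, eqToHom_refl, Category.id_comp, Category.comp_id]; rfl)

abbrev WalkingArrow : Cat.{u, u} := Cat.of (AsSmall.{u} (Fin 2))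

lemma thin_walkingArrow : Thin WalkingArrow.{u} :=
  fun _ _ => ⟨fun _ _ => ULift.ext _ _ (Subsingleton.elim _ _)⟩

def selectArrow {A : Cat.{u, u}} {a a' : A} (g : a ⟶ a') : WalkingArrow.{u} ⟶ A :=
  (AsSmall.down ⋙ ComposableArrows.mk₁ g).toCatHom

lemma selectArrow_obj {A : Cat.{u, u}} {a a' : A} (g g' : a ⟶ a') (x : WalkingArrow.{u}) :
    (selectArrow g).toFunctor.obj x = (selectArrow g').toFunctor.obj x := by
  obtain ⟨i⟩ := x
  fin_cases i <;> rfl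

lemma selectArrow_comp {A B : Cat.{u, u}} (f : A ⟶ B) {a a' : A} (g : a ⟶ a') :
    selectArrow g ≫ f = selectArrow (f.toFunctor.map g) :=
  Cat.Hom.ext (congrArg (AsSmall.down ⋙ ·) (ComposableArrows.mk₁_comp_eq f.toFunctor g))

lemma selectArrow_injective {A : Cat.{u, u}} {a a' : A} {g g' : a ⟶ a'}
    (h : selectArrow g = selectArrow g') : g = g' := by
  have : g = eqToHom rfl ≫ g' ≫ eqToHom rfl := Functor.congr_hom (congrArg Cat.Hom.toFunctor h)
    (AsSmall.up.map (homOfLE (show (0 : Fin 2) ≤ 1 by decide)))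
  simpa using this

lemma not_thin_of_isPullback {X A B P : Cat.{u, u}} {φ : X ⟶ B} {f : A ⟶ B} {π₁ : P ⟶ X}
    {π₂ : P ⟶ A} (hpb : IsPullback π₁ π₂ φ f) {s s' : X ⟶ A} (hs : s ≫ f = φ)
    (hs' : s' ≫ f = φ) (hobj : ∀ x, s.toFunctor.obj x = s'.toFunctor.obj x) (hne : s ≠ s') :
    ¬ Thin P := by
  intro hP
  let w := hpb.lift (𝟙 X) s (by simp [hs])
  let w' := hpb.lift (𝟙 X) s' (by simp [hs'])
  have : w = w' := Cat.Hom.ext_of_thin hP fun x => hpb.cat_obj_ext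
    (by simp only [← Cat.Hom.comp_obj, w, w', IsPullback.lift_fst])
    (by simp only [← Cat.Hom.comp_obj, w, w', IsPullback.lift_snd, hobj])
  exact hne <| calc
    s = w ≫ π₂ := (hpb.lift_snd _ _ _).symm
    _ = w' ≫ π₂ := by rw [this]
    _ = s' := hpb.lift_snd _ _ _

lemma CategoryTheory.Functor.faithful_of_monadicRightAdjoint {C D : Type*} [Category C]
    [Category D] (R : D ⥤ C) [MonadicRightAdjoint R] : R.Faithful :=
  Functor.Faithful.of_iso (Monad.comparisonForget (monadicAdjunction R))

lemma TrivialCov.hom_ext {P C : Cat.{u, u}} {π : P ⟶ C} (hπ : TrivialCov π) {Y : Cat.{u, u}}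
    {q q' : Y ⟶ P} (hobj : ∀ y, q.toFunctor.obj y = q'.toFunctor.obj y) (h : q ≫ π = q' ≫ π) :
    q = q' :=
  IsPullback.hom_ext hπ
    (Cat.Hom.ext_of_thin (thin_ICat P) fun y => congrArg (etaF P).toFunctor.obj (hobj y)) h

lemma Covering.eq_of_comp_eq {A B : Cat.{u, u}} {f : A ⟶ B} (hf : Covering f) {X : Cat.{u, u}}
    {s s' : X ⟶ A} (hobj : ∀ x, s.toFunctor.obj x = s'.toFunctor.obj x) (h : s ≫ f = s' ≫ f) :
    s = s' := by
  obtain ⟨C, P, p, π₁, π₂, ⟨_⟩, hp, htriv⟩ := hf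
  have := Functor.faithful_of_monadicRightAdjoint (Over.pullback p)
  let homOver (u : X ⟶ A) (hu : u ≫ f = s ≫ f) : Over.mk (s ≫ f) ⟶ Over.mk f := Over.homMk u hu
  suffices (Over.pullback p).map (homOver s rfl) = (Over.pullback p).map (homOver s' h.symm) from
    congrArg CommaMorphism.left ((Over.pullback p).map_injective this)
  let j := hp.flip.isoPullback
  have pullback_map (u : X ⟶ A) (hu : u ≫ f = s ≫ f) :
      ((Over.pullback p).map (homOver u hu)).left ≫ j.inv ≫ π₁ = pullback.snd _ _ ∧
        ((Over.pullback p).map (homOver u hu)).left ≫ j.inv ≫ π₂ = pullback.fst _ _ ≫ u := by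
    simp only [Over.pullback_map_left, j, IsPullback.isoPullback_inv_snd,
      IsPullback.isoPullback_inv_fst]
    exact ⟨pullback.lift_snd _ _ _, pullback.lift_fst _ _ _⟩
  obtain ⟨snd_s, fst_s⟩ := pullback_map s rfl
  obtain ⟨snd_s', fst_s'⟩ := pullback_map s' h.symm
  ext1
  rw [← cancel_mono j.inv]
  refine htriv.hom_ext (fun z => hp.cat_obj_ext ?_ ?_) ?_
  · simp only [← Cat.Hom.comp_obj, Category.assoc, snd_s, snd_s']
  · simp only [← Cat.Hom.comp_obj, Category.assoc, fst_s, fst_s']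
    exact hobj _
  · simp only [Category.assoc, snd_s, snd_s']

/-- If `f` is not faithful then there is a functor from a preorder along which the pullback
of `f` is never a preorder; consequently `f` is not a covering. -/
theorem not_faithful_implies_not_covering {A B : Cat.{u, u}} (f : A ⟶ B)
    (h : ¬ ∀ a a' : ↑A, Function.Injective (fun g : a ⟶ a' => f.toFunctor.map g)) :
    (∃ (X : Cat.{u, u}) (φ : X ⟶ B), Thin X ∧
      ∀ (P : Cat.{u, u}) (π₁ : P ⟶ X) (π₂ : P ⟶ A),
        IsPullback π₁ π₂ φ f → ¬ Thin P) ∧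
    ¬ Covering f := by
  obtain ⟨a, a', g, g', hfg, hne⟩ :
      ∃ (a a' : A) (g g' : a ⟶ a'), f.toFunctor.map g = f.toFunctor.map g' ∧ g ≠ g' := by
    simpa [Function.Injective] using h
  have hcomp : selectArrow g ≫ f = selectArrow g' ≫ f := by
    rw [selectArrow_comp, selectArrow_comp, hfg]
  have hsel : selectArrow g ≠ selectArrow g' := fun e => hne (selectArrow_injective e)
  refine ⟨⟨WalkingArrow, selectArrow g ≫ f, thin_walkingArrow, fun P π₁ π₂ hpb => ?_⟩,
    fun hf => ?_⟩
  · exact not_thin_of_isPullback hpb rfl hcomp.symm (selectArrow_obj g g') hsel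
  · exact hsel (hf.eq_of_comp_eq (selectArrow_obj g g') hcomp)
end
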